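/- Fix d = (d_0,…,d_n) ∈ (ℕ_{>0})^{n+1} and let Δ = {x ∈ (ℝ_{≥0})^n : |x| ≤ |d|}. Let δ ∈ ℝⁿ with δ_i + 1 > 0 for all i and Σ_i (δ_i + 1) < 1. For b = (b_1,…,b_n) ∈ (Δ + δ) ∩ ℤⁿ and I ⊆ {0,…,n} with I, I^c ≠ ∅, define C_I = {x ∈ Δ : ℓ_i(x) ≥ 0 for i ∈ I, ℓ_i(x) ≤ 0 for i ∈ I^c}, where ℓ_0(x) = Σ_{j=1}^n d_j − |x| and ℓ_i(x) = x_i − d_i for i ≥ 1. Setting b_0 = |d| − n − |b|, one has b ∈ C_I + δ if and only if b_i ≥ d_i for all i ∈ I and b_i < d_i for all i ∈ I^c. -/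
import Mathlib


noncomputable section

/-- The embedding `ℤⁿ → ℝⁿ`. -/
def castZ {n : ℕ} (a : Fin n → ℤ) : Fin n → ℝ := fun j => (a j : ℝ)

/-- The simplex `Δ = {x ∈ ℝⁿ_{≥0} : |x| ≤ |d|}`. -/
def bigSimplex (n : ℕ) (d : Fin (n + 1) → ℕ) : Set (Fin n → ℝ) :=
  {x | (∀ j, 0 ≤ x j) ∧ ∑ j, x j ≤ ∑ i, (d i : ℝ)}

/-- The affine functions `ℓ_0(x) = Σ_{j=1}^n d_j − |x|`, `ℓ_i(x) = x_i − d_i` for `i ≥ 1`. -/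
def ellFn {n : ℕ} (d : Fin (n + 1) → ℕ) (i : Fin (n + 1)) (x : Fin n → ℝ) : ℝ :=
  if h : (i : ℕ) = 0 then (∑ j : Fin n, (d j.succ : ℝ)) - ∑ j, x j
  else x ⟨(i : ℕ) - 1, by have := i.isLt; omega⟩ - (d i : ℝ)

/-- The cell `C_I = {x ∈ Δ : ℓ_i(x) ≥ 0 for i ∈ I, ℓ_i(x) ≤ 0 for i ∈ I^c}`. -/
def cellI (n : ℕ) (d : Fin (n + 1) → ℕ) (I : Finset (Fin (n + 1))) : Set (Fin n → ℝ) :=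
  {x | x ∈ bigSimplex n d ∧ (∀ i ∈ I, 0 ≤ ellFn d i x) ∧ (∀ i ∈ Iᶜ, ellFn d i x ≤ 0)}

/-- The extended point `(b_0, b)` with `b_0 = |d| − n − |b|`. -/
def bFull (n : ℕ) (d : Fin (n + 1) → ℕ) (b : Fin n → ℤ) (i : Fin (n + 1)) : ℤ :=
  if h : (i : ℕ) = 0 then (∑ j, (d j : ℤ)) - n - ∑ j, b j
  else b ⟨(i : ℕ) - 1, by have := i.isLt; omega⟩

lemma int_le_of_real_lt {a b : ℤ} (h : (a : ℝ) - 1 < (b : ℝ)) : a ≤ b := by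
  have : a - 1 < b := by exact_mod_cast h
  omega

/-- For `b ∈ (Δ + δ) ∩ ℤⁿ` and `I` with `I, I^c ≠ ∅`, one has `b ∈ C_I + δ` iff
`b_i ≥ d_i` for all `i ∈ I` and `b_i < d_i` for all `i ∈ I^c`, with `b_0 = |d| − n − |b|`. -/
theorem stmt12 (n : ℕ) (d : Fin (n + 1) → ℕ) (hd : ∀ i, 0 < d i)
    (δ : Fin n → ℝ) (hδ : ∀ i, 0 < δ i + 1) (hδs : ∑ i, (δ i + 1) < 1)
    (I : Finset (Fin (n + 1))) (hI : I.Nonempty) (hIc : Iᶜ.Nonempty)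
    (b : Fin n → ℤ) (hb : castZ b ∈ (fun x => x + δ) '' bigSimplex n d) :
    castZ b ∈ (fun x => x + δ) '' cellI n d I ↔
      (∀ i ∈ I, (d i : ℤ) ≤ bFull n d b i) ∧ (∀ i ∈ Iᶜ, bFull n d b i < (d i : ℤ)) := by
  classical
  have hn : 0 < n := by
    rcases Nat.eq_zero_or_pos n with h | h
    · subst h
      obtain ⟨i, hi⟩ := hI
      obtain ⟨j, hj⟩ := hIc
      rw [Finset.mem_compl] at hj
      have hij : i = j := Fin.ext (by omega)
      exact absurd (hij ▸ hi) hj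
    · exact h
  haveI : NeZero n := ⟨hn.ne'⟩
  have hδneg : ∀ i, δ i < 0 := by
    intro i
    have h1 : δ i + 1 ≤ ∑ j, (δ j + 1) :=
      Finset.single_le_sum (fun j _ => le_of_lt (hδ j)) (Finset.mem_univ i)
    linarith
  have hsplit : ∑ j, (δ j + 1) = (∑ j, δ j) + n := by
    rw [Finset.sum_add_distrib]; simp
  have hSpos : (0 : ℝ) < ∑ j, (δ j + 1) :=
    Finset.sum_pos (fun i _ => hδ i) Finset.univ_nonempty
  have hSδlo : -(n : ℝ) < ∑ j, δ j := by linarith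
  have hSδhi : (∑ j, δ j) < 1 - n := by linarith
  -- the point x = b - δ lies in Δ
  obtain ⟨x₀, hx₀, hx₀e⟩ := hb
  set x : Fin n → ℝ := fun j => (b j : ℝ) - δ j with hxdef
  have hx₀' : x₀ = x := by
    funext j
    have := congrFun hx₀e j
    simp only [Pi.add_apply, castZ] at this
    simp only [hxdef]
    linarith
  have hxΔ : x ∈ bigSimplex n d := hx₀' ▸ hx₀
  have hsumx : ∑ j, x j = (∑ j, (b j : ℝ)) - ∑ j, δ j := by
    simp [hxdef, Finset.sum_sub_distrib]
  have hD : (∑ i : Fin (n + 1), (d i : ℝ)) = (d 0 : ℝ) + ∑ j : Fin n, (d j.succ : ℝ) :=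
    Fin.sum_univ_succ _
  constructor
  · rintro ⟨y, hy, hye⟩
    have hyx : y = x := by
      funext j
      have := congrFun hye j
      simp only [Pi.add_apply, castZ] at this
      simp only [hxdef]
      linarith
    subst hyx
    obtain ⟨-, hI1, hI2⟩ := hy
    constructor
    · intro i hi
      have h := hI1 i hi
      by_cases h0 : (i : ℕ) = 0
      · rw [ellFn, dif_pos h0] at h
        rw [bFull, dif_pos h0]
        have hi0 : i = 0 := Fin.ext h0
        subst hi0
        apply int_le_of_real_lt
        push_cast
        linarith
      · rw [ellFn, dif_neg h0] at h
        rw [bFull, dif_neg h0]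
        apply int_le_of_real_lt
        push_cast
        have hx' : x ⟨(i : ℕ) - 1, by have := i.isLt; omega⟩ =
            (b ⟨(i : ℕ) - 1, by have := i.isLt; omega⟩ : ℝ) -
              δ ⟨(i : ℕ) - 1, by have := i.isLt; omega⟩ := rfl
        rw [hx'] at h
        have := hδ ⟨(i : ℕ) - 1, by have := i.isLt; omega⟩
        linarith
    · intro i hi
      have h := hI2 i hi
      by_cases h0 : (i : ℕ) = 0
      · rw [ellFn, dif_pos h0] at h
        rw [bFull, dif_pos h0]
        have hi0 : i = 0 := Fin.ext h0
        subst hi0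
        have : ((∑ j, (d j : ℤ)) - (n : ℤ) - ∑ j, b j : ℝ) < ((d 0 : ℤ) : ℝ) := by
          push_cast
          linarith
        exact_mod_cast this
      · rw [ellFn, dif_neg h0] at h
        rw [bFull, dif_neg h0]
        have hx' : x ⟨(i : ℕ) - 1, by have := i.isLt; omega⟩ =
            (b ⟨(i : ℕ) - 1, by have := i.isLt; omega⟩ : ℝ) -
              δ ⟨(i : ℕ) - 1, by have := i.isLt; omega⟩ := rfl
        rw [hx'] at h
        have hδn := hδneg ⟨(i : ℕ) - 1, by have := i.isLt; omega⟩
        have : ((b ⟨(i : ℕ) - 1, by have := i.isLt; omega⟩ : ℤ) : ℝ) < ((d i : ℤ) : ℝ) := by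
          push_cast
          linarith
        exact_mod_cast this
  · rintro ⟨h1, h2⟩
    refine ⟨x, ⟨hxΔ, ?_, ?_⟩, ?_⟩
    · intro i hi
      have h := h1 i hi
      by_cases h0 : (i : ℕ) = 0
      · rw [bFull, dif_pos h0] at h
        rw [ellFn, dif_pos h0]
        have hi0 : i = 0 := Fin.ext h0
        subst hi0
        have hR : ((d 0 : ℤ) : ℝ) ≤ ((∑ j, (d j : ℤ)) - (n : ℤ) - ∑ j, b j : ℝ) := by
          exact_mod_cast h
        push_cast at hR
        linarith
      · rw [bFull, dif_neg h0] at h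
        rw [ellFn, dif_neg h0]
        have hR : ((d i : ℤ) : ℝ) ≤ ((b ⟨(i : ℕ) - 1, by have := i.isLt; omega⟩ : ℤ) : ℝ) := by
          exact_mod_cast h
        push_cast at hR
        have hx' : x ⟨(i : ℕ) - 1, by have := i.isLt; omega⟩ =
            (b ⟨(i : ℕ) - 1, by have := i.isLt; omega⟩ : ℝ) -
              δ ⟨(i : ℕ) - 1, by have := i.isLt; omega⟩ := rfl
        rw [hx']
        have hδn := hδneg ⟨(i : ℕ) - 1, by have := i.isLt; omega⟩
        linarith
    · intro i hi
      have h := h2 i hi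
      by_cases h0 : (i : ℕ) = 0
      · rw [bFull, dif_pos h0] at h
        rw [ellFn, dif_pos h0]
        have hi0 : i = 0 := Fin.ext h0
        subst hi0
        have h' : (∑ j, (d j : ℤ)) - (n : ℤ) - ∑ j, b j ≤ (d 0 : ℤ) - 1 := by omega
        have hR : ((∑ j, (d j : ℤ)) - (n : ℤ) - ∑ j, b j : ℝ) ≤ ((d 0 : ℤ) - 1 : ℤ) := by
          exact_mod_cast h'
        push_cast at hR
        linarith
      · rw [bFull, dif_neg h0] at h
        rw [ellFn, dif_neg h0]
        have h' : b ⟨(i : ℕ) - 1, by have := i.isLt; omega⟩ ≤ (d i : ℤ) - 1 := by omega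
        have hR : ((b ⟨(i : ℕ) - 1, by have := i.isLt; omega⟩ : ℤ) : ℝ) ≤ ((d i : ℤ) - 1 : ℤ) := by
          exact_mod_cast h'
        push_cast at hR
        have hx' : x ⟨(i : ℕ) - 1, by have := i.isLt; omega⟩ =
            (b ⟨(i : ℕ) - 1, by have := i.isLt; omega⟩ : ℝ) -
              δ ⟨(i : ℕ) - 1, by have := i.isLt; omega⟩ := rfl
        rw [hx']
        have := hδ ⟨(i : ℕ) - 1, by have := i.isLt; omega⟩
        linarith
    · funext j
      simp only [Pi.add_apply, castZ, hxdef]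
      ring
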